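/- arXiv:2604.04279 — 3 statements merged into one kernel-verified Lean document; each statement's English description precedes it below -/
import Mathlib

section
/- Let κ : [r₀, r₁] → ℝ be continuously differentiable, strictly decreasing, and strictly convex; let g : [r₀, r₁] → ℝ be continuous, decreasing, and convex, with g(r₀) < κ(r₀). Define H(r) = κ(r) − g(r₀) − κ'(r)(r − r₀) and r* = sup{ r ∈ [r₀, r₁] : H(r) > 0 }. Then: (1) if g(r*) < κ(r*), then g(r) < κ(r) for all r ∈ [r₀, r*]; (2) if g(r*) > κ(r*), then g(r) = κ(r) has exactly one solution in (r₀, r*); (3) if g(r*) = κ(r*), then r* is the only solution of g(r) = κ(r) in [r₀, r*]. -/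
/-!
Divided by `t - r₀`, the gap `g t - κ t` is the slope from `(r₀, g r₀)` to the graph of `g`
minus the slope from `(r₀, g r₀)` to the graph of `κ`. The first slope is nondecreasing since `g`
is convex. The second is strictly decreasing on `(r₀, r*]`: for `r₀ < s ≤ r*` the tangent to `κ`
at `s` passes above `(r₀, g r₀)` (this is `H s ≥ 0`, which holds up to `r*` because `H` is
antitone and continuous), and `κ` lies strictly above that tangent. So `(g - κ) / (t - r₀)` is
strictly increasing on `(r₀, r*]`: it vanishes at most once, and its sign at `r*` decides the
three cases, the existence in the second one coming from the intermediate value theorem.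
-/

open Set

section TangentLine

variable {κ : ℝ → ℝ} {r₀ r₁ : ℝ}

lemma antitoneOn_sub_derivWithin_mul (hconv : ConvexOn ℝ (Icc r₀ r₁) κ)
    (hd : DifferentiableOn ℝ κ (Icc r₀ r₁)) :
    AntitoneOn (fun t => κ t - derivWithin κ (Icc r₀ r₁) t * (t - r₀)) (Icc r₀ r₁) := by
  intro x hx y hy hxy
  rcases hxy.eq_or_lt with rfl | hxy
  · rfl
  have hslope := hconv.slope_le_derivWithin hx hy hxy (hd y hy)
  have hderiv := hconv.monotoneOn_derivWithin hd hx hy hxy.le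
  rw [slope_def_field, div_le_iff₀ (sub_pos.2 hxy)] at hslope
  linarith [mul_le_mul_of_nonneg_right hderiv (sub_nonneg.2 hx.1)]

/-- `deriv κ s` is the junk value `0` where `κ` is not differentiable (possibly at `r₁`). -/
lemma derivWithin_mul_le_deriv_mul (hr : r₀ < r₁) (hanti : AntitoneOn κ (Icc r₀ r₁)) {s : ℝ}
    (hs : s ∈ Icc r₀ r₁) :
    derivWithin κ (Icc r₀ r₁) s * (s - r₀) ≤ deriv κ s * (s - r₀) := by
  by_cases hdiff : DifferentiableAt ℝ κ s
  · rw [hdiff.derivWithin (uniqueDiffOn_Icc hr s hs)]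
  · rw [deriv_zero_of_not_differentiableAt hdiff, zero_mul]
    exact mul_nonpos_of_nonpos_of_nonneg hanti.derivWithin_nonpos (sub_nonneg.2 hs.1)

lemma derivWithin_mul_le_of_mem_Icc_csSup (hr : r₀ < r₁) (hκ : ContDiffOn ℝ 1 κ (Icc r₀ r₁))
    (hanti : AntitoneOn κ (Icc r₀ r₁)) (hconv : ConvexOn ℝ (Icc r₀ r₁) κ) {c : ℝ} {S : Set ℝ}
    (hS : S ⊆ {r | r ∈ Icc r₀ r₁ ∧ κ r - c - deriv κ r * (r - r₀) > 0}) (hne : S.Nonempty)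
    {s : ℝ} (hs : s ∈ Icc r₀ (sSup S)) :
    derivWithin κ (Icc r₀ r₁) s * (s - r₀) ≤ κ s - c := by
  set K := Icc r₀ r₁
  set G := fun t => κ t - derivWithin κ K t * (t - r₀)
  have hclosed : IsClosed (K ∩ G ⁻¹' Ici c) :=
    (hκ.continuousOn.sub ((hκ.continuousOn_derivWithin (uniqueDiffOn_Icc hr) le_rfl).mul
      (continuousOn_id.sub continuousOn_const))).preimage_isClosed_of_isClosed
      isClosed_Icc isClosed_Ici
  have hsub : S ⊆ K ∩ G ⁻¹' Ici c := fun r hrS =>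
    ⟨(hS hrS).1, by
      have := derivWithin_mul_le_deriv_mul hr hanti (hS hrS).1
      simp only [mem_preimage, mem_Ici, G]
      linarith [(hS hrS).2]⟩
  have hsup : sSup S ∈ K ∩ G ⁻¹' Ici c :=
    closure_minimal hsub hclosed (csSup_mem_closure hne ⟨r₁, fun r hrS => (hS hrS).1.2⟩)
  have hGs : G (sSup S) ≤ G s := antitoneOn_sub_derivWithin_mul hconv
    (hκ.differentiableOn one_ne_zero) ⟨hs.1, hs.2.trans hsup.1.2⟩ hsup.1 hs.2
  have hGsup : c ≤ G (sSup S) := hsup.2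
  simp only [G] at hGs hGsup
  linarith

lemma strictAntiOn_div_sub_of_derivWithin_mul_le (hconv : StrictConvexOn ℝ (Icc r₀ r₁) κ)
    (hd : DifferentiableOn ℝ κ (Icc r₀ r₁)) {ρ c : ℝ} (hρ : ρ ≤ r₁)
    (htangent : ∀ s ∈ Ioc r₀ ρ, derivWithin κ (Icc r₀ r₁) s * (s - r₀) ≤ κ s - c) :
    StrictAntiOn (fun t => (κ t - c) / (t - r₀)) (Ioc r₀ ρ) := by
  intro t ht s hs hts
  have hsK : s ∈ Icc r₀ r₁ := ⟨hs.1.le, hs.2.trans hρ⟩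
  have hslope := hconv.slope_lt_derivWithin ⟨ht.1.le, ht.2.trans hρ⟩ hsK hts (hd s hsK)
  rw [slope_def_field, div_lt_iff₀ (sub_pos.2 hts)] at hslope
  rw [div_lt_div_iff₀ (sub_pos.2 hs.1) (sub_pos.2 ht.1)]
  linarith [mul_lt_mul_of_pos_right hslope (sub_pos.2 hs.1),
    mul_le_mul_of_nonneg_right (htangent s hs) (sub_nonneg.2 hts.le)]

end TangentLine

section GapQuotient

variable {g κ : ℝ → ℝ} {r₀ ρ : ℝ}

lemma strictMonoOn_div_sub_of_strictAntiOn {r₁ : ℝ} (hg : ConvexOn ℝ (Icc r₀ r₁) g)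
    (hρ : ρ ≤ r₁) (hκ : StrictAntiOn (fun t => (κ t - g r₀) / (t - r₀)) (Ioc r₀ ρ)) :
    StrictMonoOn (fun t => (g t - κ t) / (t - r₀)) (Ioc r₀ ρ) := by
  intro t ht s hs hts
  have hsecant := hg.secant_mono ⟨le_rfl, (ht.1.trans_le (ht.2.trans hρ)).le⟩
    ⟨ht.1.le, ht.2.trans hρ⟩ ⟨hs.1.le, hs.2.trans hρ⟩ ht.1.ne' hs.1.ne' hts.le
  have hsplit : ∀ u, (g u - κ u) / (u - r₀) = (g u - g r₀) / (u - r₀) - (κ u - g r₀) / (u - r₀) :=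
    fun u => by rw [← sub_div, sub_sub_sub_cancel_right]
  simp only [hsplit]
  linarith [hκ ht hs hts]

lemma eq_of_strictMonoOn_div_sub
    (hq : StrictMonoOn (fun t => (g t - κ t) / (t - r₀)) (Ioc r₀ ρ)) {x y : ℝ} (hx : x ∈ Ioc r₀ ρ) (hy : y ∈ Ioc r₀ ρ)
    (hgx : g x = κ x) (hgy : g y = κ y) : x = y :=
  hq.injOn hx hy (by simp [hgx, hgy])

lemma lt_of_strictMonoOn_div_sub (h0 : g r₀ < κ r₀)
    (hq : StrictMonoOn (fun t => (g t - κ t) / (t - r₀)) (Ioc r₀ ρ)) (hρ : g ρ < κ ρ) :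
    ∀ r ∈ Icc r₀ ρ, g r < κ r := by
  intro r hr
  rcases hr.1.eq_or_lt with rfl | hr₀
  · exact h0
  have hρ₀ : r₀ < ρ := hr₀.trans_le hr.2
  have hle : (g r - κ r) / (r - r₀) ≤ (g ρ - κ ρ) / (ρ - r₀) :=
    hq.monotoneOn ⟨hr₀, hr.2⟩ ⟨hρ₀, le_rfl⟩ hr.2
  have hneg : (g r - κ r) / (r - r₀) < 0 :=
    hle.trans_lt (div_neg_of_neg_of_pos (sub_neg.2 hρ) (sub_pos.2 hρ₀))
  exact sub_neg.1 (neg_of_div_neg_left hneg (sub_nonneg.2 hr.1))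

lemma existsUnique_of_strictMonoOn_div_sub (h0 : g r₀ < κ r₀)
    (hq : StrictMonoOn (fun t => (g t - κ t) / (t - r₀)) (Ioc r₀ ρ)) (hle : r₀ ≤ ρ)
    (hcont : ContinuousOn (fun t => g t - κ t) (Icc r₀ ρ)) (hρ : g ρ > κ ρ) :
    ∃! x, x ∈ Ioo r₀ ρ ∧ g x = κ x := by
  obtain ⟨x, hx, hx0⟩ := intermediate_value_Ioo hle hcont ⟨sub_neg.2 h0, sub_pos.2 hρ⟩
  have hgx : g x = κ x := sub_eq_zero.1 hx0
  exact ⟨x, ⟨hx, hgx⟩, fun y ⟨hy, hgy⟩ =>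
    eq_of_strictMonoOn_div_sub hq ⟨hy.1, hy.2.le⟩ ⟨hx.1, hx.2.le⟩ hgy hgx⟩

lemma eq_iff_of_strictMonoOn_div_sub (h0 : g r₀ < κ r₀)
    (hq : StrictMonoOn (fun t => (g t - κ t) / (t - r₀)) (Ioc r₀ ρ)) (hρ : g ρ = κ ρ) :
    ∀ r ∈ Icc r₀ ρ, (g r = κ r ↔ r = ρ) := by
  intro r hr
  refine ⟨fun hgr => ?_, fun h => h ▸ hρ⟩
  have hr₀ : r₀ < r := hr.1.lt_of_ne (by rintro rfl; exact h0.ne hgr)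
  exact eq_of_strictMonoOn_div_sub hq ⟨hr₀, hr.2⟩ ⟨hr₀.trans_le hr.2, le_rfl⟩ hgr hρ

end GapQuotient

theorem stmt2_general (r₀ r₁ : ℝ) (hr : r₀ < r₁) (κ g : ℝ → ℝ)
    (hκC1 : ContDiffOn ℝ 1 κ (Set.Icc r₀ r₁))
    (hκmono : StrictAntiOn κ (Set.Icc r₀ r₁))
    (hκconv : StrictConvexOn ℝ (Set.Icc r₀ r₁) κ)
    (hgcont : ContinuousOn g (Set.Icc r₀ r₁))
    (hgconv : ConvexOn ℝ (Set.Icc r₀ r₁) g)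
    (h0 : g r₀ < κ r₀)
    (H : ℝ → ℝ)
    (hH : ∀ r, H r = κ r - g r₀ - deriv κ r * (r - r₀))
    (rstar : ℝ)
    (hrstar : rstar = sSup {r | r ∈ Set.Icc r₀ r₁ ∧ H r > 0}) :
    (g rstar < κ rstar → ∀ r ∈ Set.Icc r₀ rstar, g r < κ r) ∧
    (g rstar > κ rstar → ∃! x, x ∈ Set.Ioo r₀ rstar ∧ g x = κ x) ∧
    (g rstar = κ rstar →
      ∀ r ∈ Set.Icc r₀ rstar, (g r = κ r ↔ r = rstar)) := by
  obtain rfl : H = fun r => κ r - g r₀ - deriv κ r * (r - r₀) := funext hH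
  have hr₀S : r₀ ∈ {r | r ∈ Icc r₀ r₁ ∧ κ r - g r₀ - deriv κ r * (r - r₀) > 0} :=
    ⟨left_mem_Icc.2 hr.le, by simpa using h0⟩
  have hstar : rstar ∈ Icc r₀ r₁ := hrstar ▸
    ⟨le_csSup ⟨r₁, fun r hrS => hrS.1.2⟩ hr₀S, csSup_le ⟨r₀, hr₀S⟩ fun r hrS => hrS.1.2⟩
  have hgap : StrictMonoOn (fun t => (g t - κ t) / (t - r₀)) (Ioc r₀ rstar) :=
    strictMonoOn_div_sub_of_strictAntiOn hgconv hstar.2 <|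
      strictAntiOn_div_sub_of_derivWithin_mul_le hκconv (hκC1.differentiableOn one_ne_zero)
        hstar.2 fun s hs => derivWithin_mul_le_of_mem_Icc_csSup hr hκC1 hκmono.antitoneOn
          hκconv.convexOn (fun r hrS => hrS) ⟨r₀, hr₀S⟩ ⟨hs.1.le, hrstar ▸ hs.2⟩
  have hcont : ContinuousOn (fun t => g t - κ t) (Icc r₀ rstar) :=
    (hgcont.sub hκC1.continuousOn).mono (Icc_subset_Icc le_rfl hstar.2)
  exact ⟨lt_of_strictMonoOn_div_sub h0 hgap,
    existsUnique_of_strictMonoOn_div_sub h0 hgap hstar.1 hcont,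
    eq_iff_of_strictMonoOn_div_sub h0 hgap⟩

/-- Step 1 of Algorithm 1 (Proposition on tangent-line bisection for the CQLR
inversion): with κ C¹, strictly decreasing, strictly convex; g continuous,
decreasing, convex; g(r₀) < κ(r₀); H(r) = κ(r) − g(r₀) − κ'(r)(r − r₀) and
r* = sup { r ∈ [r₀,r₁] : H(r) > 0 }, the three cases on the sign of
g(r*) − κ(r*) classify the intersections of g and κ on [r₀, r*]. -/
theorem stmt2 (r₀ r₁ : ℝ) (hr : r₀ < r₁) (κ g : ℝ → ℝ)
    (hκC1 : ContDiffOn ℝ 1 κ (Set.Icc r₀ r₁))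
    (hκmono : StrictAntiOn κ (Set.Icc r₀ r₁))
    (hκconv : StrictConvexOn ℝ (Set.Icc r₀ r₁) κ)
    (hgcont : ContinuousOn g (Set.Icc r₀ r₁))
    (hgmono : AntitoneOn g (Set.Icc r₀ r₁))
    (hgconv : ConvexOn ℝ (Set.Icc r₀ r₁) g)
    (h0 : g r₀ < κ r₀)
    (H : ℝ → ℝ)
    (hH : ∀ r, H r = κ r - g r₀ - deriv κ r * (r - r₀))
    (rstar : ℝ)
    (hrstar : rstar = sSup {r | r ∈ Set.Icc r₀ r₁ ∧ H r > 0}) :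
    (g rstar < κ rstar → ∀ r ∈ Set.Icc r₀ rstar, g r < κ r) ∧
    (g rstar > κ rstar → ∃! x, x ∈ Set.Ioo r₀ rstar ∧ g x = κ x) ∧
    (g rstar = κ rstar →
      ∀ r ∈ Set.Icc r₀ rstar, (g r = κ r ↔ r = rstar)) :=
  stmt2_general r₀ r₁ hr κ g hκC1 hκmono hκconv hgcont hgconv h0 H hH rstar hrstar
end

section
/- Let Σ be a symmetric positive definite 2k×2k matrix, β₀ ∈ ℝ, a₀ = (β₀, 1)ᵀ, b₀ = (1, −β₀)ᵀ, and R a 2k-dimensional vector arranged as vec(R) for a k×2 matrix R. Define B(β₀) = Σ (b₀ ⊗ I_k) [(b₀ᵀ ⊗ I_k) Σ (b₀ ⊗ I_k)]^{−1/2} and A(β₀) = (a₀ ⊗ I_k) [(a₀ᵀ ⊗ I_k) Σ⁻¹ (a₀ ⊗ I_k)]^{−1/2}, and let S = [(b₀ᵀ ⊗ I_k) Σ (b₀ ⊗ I_k)]^{−1/2} (b₀ᵀ ⊗ I_k) vec(R) and T = [(a₀ᵀ ⊗ I_k) Σ⁻¹ (a₀ ⊗ I_k)]^{−1/2} (a₀ᵀ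 ⊗ I_k) Σ⁻¹ vec(R). Then vec(R) = B(β₀) S + A(β₀) T. -/
open Matrix Kronecker

/-- Lemma 1 (inverse transformation): with Σ symmetric positive definite,
a₀ = (β₀,1)ᵀ, b₀ = (1,−β₀)ᵀ, S and T the standardized statistics, and
B(β₀) = Σ(b₀⊗I)[(b₀ᵀ⊗I)Σ(b₀⊗I)]^{−1/2}, A(β₀) = (a₀⊗I)[(a₀ᵀ⊗I)Σ⁻¹(a₀⊗I)]^{−1/2},
the reduced-form statistic decomposes as vec(R) = B(β₀)S + A(β₀)T. -/
theorem stmt15 (k : ℕ) (β₀ : ℝ)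
    (Sg : Matrix (Fin 2 × Fin k) (Fin 2 × Fin k) ℝ) (hSg : Sg.PosDef)
    (a₀ b₀ : Matrix (Fin 2) (Fin 1) ℝ)
    (ha : a₀ = !![β₀; 1]) (hb : b₀ = !![1; -β₀])
    (Sb Sa : Matrix (Fin 1 × Fin k) (Fin 1 × Fin k) ℝ)
    (hSbpd : Sb.PosDef)
    (hSb : Sb * Sb = (b₀ᵀ ⊗ₖ (1 : Matrix (Fin k) (Fin k) ℝ)) * Sg *
      (b₀ ⊗ₖ (1 : Matrix (Fin k) (Fin k) ℝ)))
    (hSapd : Sa.PosDef)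
    (hSa : Sa * Sa = (a₀ᵀ ⊗ₖ (1 : Matrix (Fin k) (Fin k) ℝ)) * Sg⁻¹ *
      (a₀ ⊗ₖ (1 : Matrix (Fin k) (Fin k) ℝ)))
    (vecR : Fin 2 × Fin k → ℝ) (S T : Fin 1 × Fin k → ℝ)
    (hS : S = Sb⁻¹ *ᵥ ((b₀ᵀ ⊗ₖ (1 : Matrix (Fin k) (Fin k) ℝ)) *ᵥ vecR))
    (hT : T = Sa⁻¹ *ᵥ ((a₀ᵀ ⊗ₖ (1 : Matrix (Fin k) (Fin k) ℝ)) *ᵥ (Sg⁻¹ *ᵥ vecR))) :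
    vecR = (Sg * (b₀ ⊗ₖ (1 : Matrix (Fin k) (Fin k) ℝ)) * Sb⁻¹) *ᵥ S +
      ((a₀ ⊗ₖ (1 : Matrix (Fin k) (Fin k) ℝ)) * Sa⁻¹) *ᵥ T := by
  set u : Matrix (Fin 2 × Fin k) (Fin 1 × Fin k) ℝ :=
    b₀ ⊗ₖ (1 : Matrix (Fin k) (Fin k) ℝ) with hu
  set ut : Matrix (Fin 1 × Fin k) (Fin 2 × Fin k) ℝ :=
    b₀ᵀ ⊗ₖ (1 : Matrix (Fin k) (Fin k) ℝ) with hut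
  set v : Matrix (Fin 2 × Fin k) (Fin 1 × Fin k) ℝ :=
    a₀ ⊗ₖ (1 : Matrix (Fin k) (Fin k) ℝ) with hv
  set vt : Matrix (Fin 1 × Fin k) (Fin 2 × Fin k) ℝ :=
    a₀ᵀ ⊗ₖ (1 : Matrix (Fin k) (Fin k) ℝ) with hvt
  -- orthogonality facts
  have hab : a₀ᵀ * b₀ = 0 := by
    subst ha hb; ext i j
    fin_cases i <;> fin_cases j <;>
      (simp [Matrix.mul_apply, Fin.sum_univ_two, Matrix.one_apply, Matrix.transpose, Matrix.vecHead, Matrix.vecTail]; try ring)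
  have hba : b₀ᵀ * a₀ = 0 := by
    subst ha hb; ext i j
    fin_cases i <;> fin_cases j <;>
      (simp [Matrix.mul_apply, Fin.sum_univ_two, Matrix.one_apply, Matrix.transpose, Matrix.vecHead, Matrix.vecTail]; try ring)
  have haa : a₀ᵀ * a₀ = (1 + β₀ ^ 2) • (1 : Matrix (Fin 1) (Fin 1) ℝ) := by
    subst ha; ext i j
    fin_cases i <;> fin_cases j <;>
      (simp [Matrix.mul_apply, Fin.sum_univ_two, Matrix.one_apply, Matrix.transpose, Matrix.vecHead, Matrix.vecTail]; try ring)
  have hbbaa : b₀ * b₀ᵀ + a₀ * a₀ᵀ = (1 + β₀ ^ 2) • (1 : Matrix (Fin 2) (Fin 2) ℝ) := by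
    subst ha hb; ext i j
    fin_cases i <;> fin_cases j <;>
      (simp [Matrix.mul_apply, Fin.sum_univ_two, Matrix.one_apply, Matrix.transpose, Matrix.vecHead, Matrix.vecTail]; try ring)
  have hvtu : vt * u = 0 := by
    rw [hvt, hu, ← Matrix.mul_kronecker_mul, hab, Matrix.zero_kronecker]
  have hutv : ut * v = 0 := by
    rw [hut, hv, ← Matrix.mul_kronecker_mul, hba, Matrix.zero_kronecker]
  have hvtv : vt * v = (1 + β₀ ^ 2) • 1 := by
    rw [hvt, hv, ← Matrix.mul_kronecker_mul, haa, one_mul, Matrix.smul_kronecker,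
      Matrix.one_kronecker_one]
  have hsum : u * ut + v * vt = (1 + β₀ ^ 2) • 1 := by
    rw [hu, hut, hv, hvt, ← Matrix.mul_kronecker_mul, ← Matrix.mul_kronecker_mul, one_mul,
      ← Matrix.add_kronecker, hbbaa, Matrix.smul_kronecker, Matrix.one_kronecker_one]
  have hc : (1 + β₀ ^ 2 : ℝ) ≠ 0 := by positivity
  -- invertibility facts
  have hSgdet : IsUnit Sg.det := (Matrix.isUnit_iff_isUnit_det Sg).mp hSg.isUnit
  have hSbdet : IsUnit Sb.det := (Matrix.isUnit_iff_isUnit_det Sb).mp hSbpd.isUnit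
  have hSadet : IsUnit Sa.det := (Matrix.isUnit_iff_isUnit_det Sa).mp hSapd.isUnit
  have hSbinv : Sb⁻¹ * Sb = 1 := Matrix.nonsing_inv_mul Sb hSbdet
  have hSainv : Sa⁻¹ * Sa = 1 := Matrix.nonsing_inv_mul Sa hSadet
  have hSginv : Sg⁻¹ * Sg = 1 := Matrix.nonsing_inv_mul Sg hSgdet
  have hSbSb : IsUnit (Sb * Sb) := hSbpd.isUnit.mul hSbpd.isUnit
  -- N and its invertibility
  set N : Matrix (Fin 2 × Fin k) (Fin 2 × Fin k) ℝ := Sg * (u * ut) + v * vt with hN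
  have hNunit : IsUnit N := by
    rw [← Matrix.mulVec_injective_iff_isUnit]
    have key : ∀ x, N *ᵥ x = 0 → x = 0 := by
      intro x hx
      have hutN : ut * N = Sb * Sb * ut := by
        rw [hN, Matrix.mul_add, ← Matrix.mul_assoc ut v vt, hutv, Matrix.zero_mul, add_zero,
          ← Matrix.mul_assoc, ← Matrix.mul_assoc, ← hSb]
      have hs : ut *ᵥ x = 0 := by
        have h1 : (Sb * Sb) *ᵥ (ut *ᵥ x) = (Sb * Sb) *ᵥ 0 := by
          rw [Matrix.mulVec_zero, Matrix.mulVec_mulVec, ← hutN, ← Matrix.mulVec_mulVec, hx,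
            Matrix.mulVec_zero]
        exact (Matrix.mulVec_injective_iff_isUnit.mpr hSbSb) h1
      have hvv : (v * vt) *ᵥ x = 0 := by
        have h2 : (Sg * (u * ut)) *ᵥ x + (v * vt) *ᵥ x = 0 := by
          rw [← Matrix.add_mulVec, ← hN, hx]
        rw [← Matrix.mulVec_mulVec x Sg (u * ut), ← Matrix.mulVec_mulVec x u ut, hs,
          Matrix.mulVec_zero, Matrix.mulVec_zero, zero_add] at h2
        exact h2
      have ht0 : vt *ᵥ x = 0 := by
        have e3 : vt * v * vt = (1 + β₀ ^ 2) • vt := by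
          rw [hvtv, Matrix.smul_mul, Matrix.one_mul]
        have h3 : (1 + β₀ ^ 2) • (vt *ᵥ x) = 0 := by
          rw [← Matrix.smul_mulVec, ← e3, Matrix.mul_assoc,
            ← Matrix.mulVec_mulVec x vt (v * vt), hvv, Matrix.mulVec_zero]
        rcases smul_eq_zero.mp h3 with h | h
        · exact absurd h hc
        · exact h
      have h4 : (1 + β₀ ^ 2) • x = 0 := by
        have h5 : ((1 + β₀ ^ 2) • (1 : Matrix (Fin 2 × Fin k) (Fin 2 × Fin k) ℝ)) *ᵥ x = 0 := by
          rw [← hsum, Matrix.add_mulVec, hvv, add_zero, ← Matrix.mulVec_mulVec x u ut, hs,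
            Matrix.mulVec_zero]
        rwa [Matrix.smul_mulVec, Matrix.one_mulVec] at h5
      rcases smul_eq_zero.mp h4 with h | h
      · exact absurd h hc
      · exact h
    intro x y hxy
    have hz : N *ᵥ (x - y) = 0 := by rw [Matrix.mulVec_sub, hxy, sub_self]
    exact sub_eq_zero.mp (key _ hz)
  have hNdet : IsUnit N.det := (Matrix.isUnit_iff_isUnit_det N).mp hNunit
  -- the two projections
  set P : Matrix (Fin 2 × Fin k) (Fin 2 × Fin k) ℝ := Sg * u * Sb⁻¹ * Sb⁻¹ * ut with hP
  set Q : Matrix (Fin 2 × Fin k) (Fin 2 × Fin k) ℝ := v * Sa⁻¹ * Sa⁻¹ * vt * Sg⁻¹ with hQ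
  have e1 : ut * (Sg * (u * ut)) = Sb * (Sb * ut) := by
    rw [← Matrix.mul_assoc, ← Matrix.mul_assoc, ← hSb, Matrix.mul_assoc]
  have e2 : vt * (Sg⁻¹ * (v * vt)) = Sa * (Sa * vt) := by
    rw [← Matrix.mul_assoc, ← Matrix.mul_assoc, ← hSa, Matrix.mul_assoc]
  have hp1 : P * (Sg * (u * ut)) = Sg * (u * ut) := by
    rw [hP]
    simp only [Matrix.mul_assoc]
    rw [e1, ← Matrix.mul_assoc Sb⁻¹ Sb, hSbinv, Matrix.one_mul,
      ← Matrix.mul_assoc Sb⁻¹ Sb, hSbinv, Matrix.one_mul]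
  have hp2 : P * (v * vt) = 0 := by
    rw [hP]
    simp only [Matrix.mul_assoc]
    rw [← Matrix.mul_assoc ut v, hutv, Matrix.zero_mul, Matrix.mul_zero, Matrix.mul_zero,
      Matrix.mul_zero, Matrix.mul_zero]
  have hq1 : Q * (Sg * (u * ut)) = 0 := by
    rw [hQ]
    simp only [Matrix.mul_assoc]
    rw [← Matrix.mul_assoc Sg⁻¹ Sg, hSginv, Matrix.one_mul, ← Matrix.mul_assoc vt u, hvtu,
      Matrix.zero_mul, Matrix.mul_zero, Matrix.mul_zero, Matrix.mul_zero]
  have hq2 : Q * (v * vt) = v * vt := by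
    rw [hQ]
    simp only [Matrix.mul_assoc]
    rw [e2, ← Matrix.mul_assoc Sa⁻¹ Sa, hSainv, Matrix.one_mul,
      ← Matrix.mul_assoc Sa⁻¹ Sa, hSainv, Matrix.one_mul]
  have hPQN : (P + Q) * N = N := by
    rw [hN, Matrix.add_mul, Matrix.mul_add, Matrix.mul_add, hp1, hp2, hq1, hq2, add_zero,
      zero_add]
  have hPQ : P + Q = 1 := by
    have h := congrArg (fun M => M * N⁻¹) hPQN
    simp only [Matrix.mul_assoc] at h
    rwa [Matrix.mul_nonsing_inv N hNdet, Matrix.mul_one] at h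
  -- conclude
  rw [hS, hT]
  simp only [Matrix.mulVec_mulVec]
  calc vecR = (1 : Matrix (Fin 2 × Fin k) (Fin 2 × Fin k) ℝ) *ᵥ vecR := by
        rw [Matrix.one_mulVec]
    _ = (P + Q) *ᵥ vecR := by rw [hPQ]
    _ = _ := by
        rw [Matrix.add_mulVec, hP, hQ]
        simp only [Matrix.mul_assoc]
end

section
/- With notation as above (a₀ = (β₀,1)ᵀ, b₀ = (1,−β₀)ᵀ, Σ symmetric positive definite 2k×2k), the statistics S and T are uncorrelated under any distribution of vec(R) with covariance Σ: Cov(S, T) = [(b₀ᵀ⊗I_k)Σ(b₀⊗I_k)]^{−1/2} (b₀ᵀ⊗I_k) Σ Σ⁻¹ (a₀⊗I_k) [(a₀ᵀ⊗I_k)Σ⁻¹(a₀⊗I_k)]^{−1/2} = 0, since (b₀ᵀ ⊗ I_k)(a₀ ⊗ I_k) = (b₀ᵀ a₀) I_k = 0. -/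
open Matrix Kronecker

/-- Uncorrelatedness of S and T: since (b₀ᵀ ⊗ I_k)(a₀ ⊗ I_k) = (b₀ᵀa₀) I_k = 0,
the covariance matrix
[(b₀ᵀ⊗I)Σ(b₀⊗I)]^{−1/2}(b₀ᵀ⊗I) Σ Σ⁻¹ (a₀⊗I)[(a₀ᵀ⊗I)Σ⁻¹(a₀⊗I)]^{−1/2}
of S and T vanishes. -/
theorem stmt16 (k : ℕ) (β₀ : ℝ)
    (Sg : Matrix (Fin 2 × Fin k) (Fin 2 × Fin k) ℝ) (hSg : Sg.PosDef)
    (a₀ b₀ : Matrix (Fin 2) (Fin 1) ℝ)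
    (ha : a₀ = !![β₀; 1]) (hb : b₀ = !![1; -β₀])
    (Sb Sa : Matrix (Fin 1 × Fin k) (Fin 1 × Fin k) ℝ)
    (hSbpd : Sb.PosDef)
    (hSb : Sb * Sb = (b₀ᵀ ⊗ₖ (1 : Matrix (Fin k) (Fin k) ℝ)) * Sg *
      (b₀ ⊗ₖ (1 : Matrix (Fin k) (Fin k) ℝ)))
    (hSapd : Sa.PosDef)
    (hSa : Sa * Sa = (a₀ᵀ ⊗ₖ (1 : Matrix (Fin k) (Fin k) ℝ)) * Sg⁻¹ *
      (a₀ ⊗ₖ (1 : Matrix (Fin k) (Fin k) ℝ))) :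
    (b₀ᵀ ⊗ₖ (1 : Matrix (Fin k) (Fin k) ℝ)) *
      (a₀ ⊗ₖ (1 : Matrix (Fin k) (Fin k) ℝ)) = 0 ∧
    Sb⁻¹ * ((b₀ᵀ ⊗ₖ (1 : Matrix (Fin k) (Fin k) ℝ)) * Sg * Sg⁻¹ *
      (a₀ ⊗ₖ (1 : Matrix (Fin k) (Fin k) ℝ))) * Sa⁻¹ = 0 := by

  have hkey : (b₀ᵀ ⊗ₖ (1 : Matrix (Fin k) (Fin k) ℝ)) *
      (a₀ ⊗ₖ (1 : Matrix (Fin k) (Fin k) ℝ)) = 0 := by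
    rw [← Matrix.mul_kronecker_mul, ha, hb]
    have : (!![1; -β₀] : Matrix (Fin 2) (Fin 1) ℝ)ᵀ * !![β₀; 1] = 0 := by
      ext i j
      fin_cases i <;> fin_cases j <;>
        simp [Matrix.mul_apply, Fin.sum_univ_two, Matrix.vecHead, Matrix.vecTail]
    rw [this]
    simp [Matrix.zero_kronecker]
  refine ⟨hkey, ?_⟩
  have hinv : Sg * Sg⁻¹ = 1 := Matrix.mul_nonsing_inv _ (isUnit_iff_ne_zero.mpr hSg.det_pos.ne')
  rw [Matrix.mul_assoc ((b₀ᵀ ⊗ₖ (1 : Matrix (Fin k) (Fin k) ℝ))) Sg Sg⁻¹, hinv, Matrix.mul_one, hkey]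
  simp
end
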